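/- Let a, d ∈ ℝ with a ≠ 0 and d ≠ 0, set γ = 2d/a, e₁(x,y) = 2d·x, e₂(x,y) = 0 (this is the case c = 0, f = d of the modified Lotka–Volterra structure). For differentiable u, v defined for x > 0, y > 0, t > 0, define {u,v} = −(a·x·y/t)(∂_x u·∂_y v − ∂_y u·∂_x v) + e₁·(∂_t u·∂_x v − ∂_x u·∂_t v) + e₂·(∂_t u·∂_y v − ∂_y u·∂_t v). Let U(x,y,t) := log(x) and V(x,y,t) := (t/(a·γ))·(y^{−γ} − 1). Then for every point with x, y, t > 0, {U, V} = 1. -/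

import Mathlib

/-- Partial derivative in the first coordinate of `ℝ³`. -/
noncomputable def pdx (u : ℝ × ℝ × ℝ → ℝ) (P : ℝ × ℝ × ℝ) : ℝ :=
  deriv (fun s => u (s, P.2.1, P.2.2)) P.1

/-- Partial derivative in the second coordinate of `ℝ³`. -/
noncomputable def pdy (u : ℝ × ℝ × ℝ → ℝ) (P : ℝ × ℝ × ℝ) : ℝ :=
  deriv (fun s => u (P.1, s, P.2.2)) P.2.1

/-- Partial derivative in the third coordinate of `ℝ³`. -/
noncomputable def pdt (u : ℝ × ℝ × ℝ → ℝ) (P : ℝ × ℝ × ℝ) : ℝ :=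
  deriv (fun s => u (P.1, P.2.1, s)) P.2.2

/-- The Poissonized modified Lotka–Volterra bracket in the case `c = 0`,
`f = d`, i.e. `e₁(x,y) = 2dx`, `e₂(x,y) = 0`, on coordinates `(x,y,t)`. -/
noncomputable def brLV (a d : ℝ) (u v : ℝ × ℝ × ℝ → ℝ) (P : ℝ × ℝ × ℝ) : ℝ :=
  -(a * P.1 * P.2.1 / P.2.2) * (pdx u P * pdy v P - pdy u P * pdx v P)
  + (2 * d * P.1) * (pdt u P * pdx v P - pdx u P * pdt v P)
  + (0 : ℝ) * (pdt u P * pdy v P - pdy u P * pdt v P)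

/-- `U(x,y,t) = log x`. -/
noncomputable def Ucoord (P : ℝ × ℝ × ℝ) : ℝ := Real.log P.1

/-- `V(x,y,t) = (t/(aγ))(y^{−γ} − 1)` with `γ = 2d/a`. -/
noncomputable def Vcoord (a d : ℝ) (P : ℝ × ℝ × ℝ) : ℝ :=
  (P.2.2 / (a * (2 * d / a))) * (P.2.1 ^ (-(2 * d / a)) - 1)

/-- The functions `U = log x` and `V = (t/(aγ))(y^{−γ} − 1)` with `γ = 2d/a`
are canonically conjugate for the Poissonized Lotka–Volterra bracket:
`{U, V} = 1` on the positive octant. -/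
theorem stmt_17 (a d : ℝ) (ha : a ≠ 0) (hd : d ≠ 0) :
    ∀ P : ℝ × ℝ × ℝ, 0 < P.1 → 0 < P.2.1 → 0 < P.2.2 →
      brLV a d Ucoord (Vcoord a d) P = 1 := by
  rintro ⟨x, y, t⟩ hx hy ht
  set g : ℝ := 2 * d / a with hg
  have hgne : g ≠ 0 := by
    simp [hg]
    exact ⟨hd, ha⟩
  have hUx : pdx Ucoord (x, y, t) = 1 / x := by
    simp [pdx, Ucoord, Real.deriv_log, one_div]
  have hUy : pdy Ucoord (x, y, t) = 0 := by
    simp [pdy, Ucoord]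
  have hUt : pdt Ucoord (x, y, t) = 0 := by
    simp [pdt, Ucoord]
  have hVx : pdx (Vcoord a d) (x, y, t) = 0 := by
    simp [pdx, Vcoord]
  have hVy : pdy (Vcoord a d) (x, y, t) = (t / (a * g)) * (-g * y ^ (-g - 1)) := by
    have h1 : HasDerivAt (fun s : ℝ => s ^ (-g)) (-g * y ^ (-g - 1)) y :=
      Real.hasDerivAt_rpow_const (Or.inl hy.ne')
    have h2 : HasDerivAt (fun s : ℝ => (t / (a * g)) * (s ^ (-g) - 1))
        ((t / (a * g)) * (-g * y ^ (-g - 1))) y := ((h1.sub_const 1).const_mul _)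
    simpa [pdy, Vcoord, hg] using h2.deriv
  have hVt : pdt (Vcoord a d) (x, y, t) = (y ^ (-g) - 1) / (a * g) := by
    have h2 : HasDerivAt (fun s : ℝ => (s / (a * g)) * (y ^ (-g) - 1))
        ((1 / (a * g)) * (y ^ (-g) - 1)) t := by
      simpa using ((hasDerivAt_id t).div_const (a * g)).mul_const (y ^ (-g) - 1)
    simp only [pdt, Vcoord, ← hg, h2.deriv]
    ring
  simp only [brLV, hUx, hUy, hUt, hVx, hVy, hVt]
  have hag : a * g = 2 * d := by rw [hg, mul_div_assoc']; exact mul_div_cancel_left₀ _ ha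
  have hyg : y ^ (-g - 1) = y ^ (-g) / y := by
    rw [Real.rpow_sub hy, Real.rpow_one]
  rw [hag, hyg]
  generalize y ^ (-g) = w
  field_simp
  linear_combination (y * t * d * w * 2) * mul_inv_cancel₀ ha
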